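/- arXiv:1501.01431 — 10 statements merged into one kernel-verified Lean document; each statement's English description precedes it below -/
import Mathlib

section
/- Every right unitary subsemigroup of a left simple semigroup is itself a left simple semigroup. -/
open Pointwise

/-- A nonempty subset closed under multiplication. -/
def IsSubsemigroup {S : Type*} [Mul S] (H : Set S) : Prop :=
  H.Nonempty ∧ ∀ a ∈ H, ∀ b ∈ H, a * b ∈ H

/-- `H` is reflexive in `S`: `ab ∈ H` implies `ba ∈ H`. -/
def IsReflexive {S : Type*} [Mul S] (H : Set S) : Prop :=
  ∀ a b : S, a * b ∈ H → b * a ∈ H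

/-- `H` is unitary in `S`. -/
def IsUnitary {S : Type*} [Mul S] (H : Set S) : Prop :=
  (∀ a b : S, a * b ∈ H → a ∈ H → b ∈ H) ∧
  (∀ a b : S, a * b ∈ H → b ∈ H → a ∈ H)

/-- `H` is reflexive in the subsemigroup `T`. -/
def IsReflexiveIn {S : Type*} [Mul S] (H T : Set S) : Prop :=
  ∀ a ∈ T, ∀ b ∈ T, a * b ∈ H → b * a ∈ H

/-- `H` is unitary in the subsemigroup `T`. -/
def IsUnitaryIn {S : Type*} [Mul S] (H T : Set S) : Prop :=
  (∀ a ∈ T, ∀ b ∈ T, a * b ∈ H → a ∈ H → b ∈ H) ∧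
  (∀ a ∈ T, ∀ b ∈ T, a * b ∈ H → b ∈ H → a ∈ H)

/-- A semigroup is left simple iff `Sa = S` for every `a`. -/
def LeftSimple (S : Type*) [Mul S] : Prop := ∀ a b : S, ∃ s : S, s * a = b

/-- The principal relation `P_H` determined by `H`:
`(a,b) ∈ P_H` iff `∀ s t, sat ∈ H ↔ sbt ∈ H`. -/
def PrinCong {S : Type*} [Mul S] (H : Set S) (a b : S) : Prop :=
  ∀ s t : S, s * a * t ∈ H ↔ s * b * t ∈ H

/-- `f : S → G` realizes the group `G` as the factor semigroup `S/P_H`,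
with identity element the class `H`. -/
def IsQuotientGroupBy {S : Type*} [Mul S] (H : Set S) {G : Type*} [Group G]
    (f : S → G) : Prop :=
  Function.Surjective f ∧ (∀ a b : S, f (a * b) = f a * f b) ∧
  (∀ a b : S, f a = f b ↔ PrinCong H a b) ∧ (∀ a : S, a ∈ H ↔ f a = 1)

/-- `f` realizes the group `G` as the factor `T/P_K` of the subsemigroup `T`
by the principal congruence of `T` determined by `K ⊆ T`, with identity class `K`. -/
def IsFactorGroupOn {S : Type*} [Mul S] (T K : Set S) {G : Type*} [Group G]
    (f : {x : S // x ∈ T} → G) : Prop :=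
  Function.Surjective f ∧
  (∀ (x y : S) (hx : x ∈ T) (hy : y ∈ T) (hxy : x * y ∈ T),
    f ⟨x * y, hxy⟩ = f ⟨x, hx⟩ * f ⟨y, hy⟩) ∧
  (∀ x y : {x : S // x ∈ T}, f x = f y ↔
    ∀ s t : {x : S // x ∈ T}, ((s : S) * x * t ∈ K ↔ (s : S) * y * t ∈ K)) ∧
  (∀ x : {x : S // x ∈ T}, f x = 1 ↔ (x : S) ∈ K)

/-- The factor groups `T/P_K` and `T'/P_{K'}` are isomorphic. -/
def FactorsIsomorphic {S : Type*} [Mul S] (T K T' K' : Set S) : Prop :=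
  ∃ (G : Type) (g : Group G) (f : {x : S // x ∈ T} → G)
    (f' : {x : S // x ∈ T'} → G),
    @IsFactorGroupOn S _ T K G g f ∧ @IsFactorGroupOn S _ T' K' G g f'

/-- Every right unitary subsemigroup of a left simple semigroup is left simple. -/
theorem right_unitary_subsemigroup_left_simple {S : Type*} [Semigroup S]
    (hS : LeftSimple S) (N : Set S) (hN : IsSubsemigroup N)
    (hru : ∀ a b : S, a * b ∈ N → b ∈ N → a ∈ N) :
    ∀ a ∈ N, ∀ b ∈ N, ∃ s ∈ N, s * a = b := by
  intro a ha b hb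
  obtain ⟨s, hs⟩ := hS a b
  exact ⟨s, hru s a (hs ▸ hb) ha, hs⟩
end

section
/- Let S be a left simple semigroup and P a congruence on S such that S/P is a group with identity element H (as a congruence class). Then H is a reflexive unitary subsemigroup of S and P equals the principal congruence P_H. -/
open Pointwise

/-!
Everything is read off the multiplicative map `f : S → G` onto the group `S/P`, whose identity
class is `H = f⁻¹(1)`. Closure, reflexivity and unitarity of `H` are the facts `xy = 1 → yx = 1`
and `1 · y = y` in `G`. For `P = P_H`: if `f a = f b` then `f (s a t) = f (s b t)`; conversely,
choosing `s` with `f s = (f a)⁻¹` and `t` with `f t = 1` puts `s a t` in `H`, hence `s b t`,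
i.e. `(f a)⁻¹ f b = 1`.
-/

namespace MulHom

variable {S G : Type*} [Mul S] [Group G] (f : S →ₙ* G)

theorem isSubsemigroup_setOf_eq_one (hf : Function.Surjective f) :
    IsSubsemigroup {a | f a = 1} :=
  ⟨hf 1, fun a (ha : f a = 1) b (hb : f b = 1) => show f (a * b) = 1 by simp [ha, hb]⟩

theorem isReflexive_setOf_eq_one : IsReflexive {a | f a = 1} :=
  fun a b (hab : f (a * b) = 1) => show f (b * a) = 1 by
    rw [map_mul] at hab ⊢
    exact mul_eq_one_comm.mp hab

theorem isUnitary_setOf_eq_one : IsUnitary {a | f a = 1} :=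
  ⟨fun a b (hab : f (a * b) = 1) (ha : f a = 1) => by simpa [ha] using hab,
    fun a b (hab : f (a * b) = 1) (hb : f b = 1) => by simpa [hb] using hab⟩

theorem prinCong_setOf_eq_one_iff (hf : Function.Surjective f) {a b : S} :
    PrinCong {x | f x = 1} a b ↔ f a = f b := by
  constructor
  · intro h
    obtain ⟨s, hs⟩ := hf (f a)⁻¹
    obtain ⟨t, ht⟩ := hf 1
    have hsbt : f (s * b * t) = 1 := (h s t).mp (show f (s * a * t) = 1 by simp [hs, ht])
    simp only [map_mul, hs, ht, mul_one] at hsbt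
    exact inv_mul_eq_one.mp hsbt
  · intro h s t
    show f (s * a * t) = 1 ↔ f (s * b * t) = 1
    rw [map_mul, map_mul, map_mul, map_mul, h]

end MulHom

theorem group_congruence_identity_class_general {S : Type*} [Semigroup S]
    (P : S → S → Prop)
    {G : Type*} [Group G] (f : S → G) (hsurj : Function.Surjective f)
    (hmul : ∀ a b : S, f (a * b) = f a * f b)
    (hker : ∀ a b : S, f a = f b ↔ P a b)
    (H : Set S) (hH : H = {a : S | f a = 1}) :
    IsSubsemigroup H ∧ IsReflexive H ∧ IsUnitary H ∧
      ∀ a b : S, P a b ↔ PrinCong H a b := by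
  let φ : S →ₙ* G := ⟨f, hmul⟩
  subst hH
  exact ⟨φ.isSubsemigroup_setOf_eq_one hsurj, φ.isReflexive_setOf_eq_one,
    φ.isUnitary_setOf_eq_one,
    fun a b => (hker a b).symm.trans (φ.prinCong_setOf_eq_one_iff hsurj).symm⟩

/-- If `P` is a congruence on a left simple semigroup `S` such that `S/P` is a
group with identity class `H`, then `H` is a reflexive unitary subsemigroup of
`S` and `P = P_H`. -/
theorem group_congruence_identity_class {S : Type*} [Semigroup S]
    (hS : LeftSimple S) (P : S → S → Prop) (hequiv : Equivalence P)
    (hcomp : ∀ a b c d : S, P a b → P c d → P (a * c) (b * d))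
    {G : Type*} [Group G] (f : S → G) (hsurj : Function.Surjective f)
    (hmul : ∀ a b : S, f (a * b) = f a * f b)
    (hker : ∀ a b : S, f a = f b ↔ P a b)
    (H : Set S) (hH : H = {a : S | f a = 1}) :
    IsSubsemigroup H ∧ IsReflexive H ∧ IsUnitary H ∧
      ∀ a b : S, P a b ↔ PrinCong H a b :=
  group_congruence_identity_class_general P f hsurj hmul hker H hH
end

section
/- Let S be a left simple semigroup, H a reflexive unitary subsemigroup of S, and N a unitary subsemigroup of S with H ⊆ N. Then N is saturated by the principal congruence P_H (i.e., N is a union of P_H-classes). -/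
open Pointwise

/-- If `H ⊆ N` with `H` reflexive unitary and `N` unitary in a left simple
semigroup `S`, then `N` is saturated by `P_H`. -/
theorem unitary_saturated_by_prinCong {S : Type*} [Semigroup S]
    (hS : LeftSimple S) (H N : Set S)
    (hHsub : IsSubsemigroup H) (hHrefl : IsReflexive H) (hHuni : IsUnitary H)
    (hNsub : IsSubsemigroup N) (hNuni : IsUnitary N) (hHN : H ⊆ N) :
    ∀ a ∈ N, ∀ b : S, PrinCong H a b → b ∈ N := by
  intro a haN b hab
  obtain ⟨h, hh⟩ := hHsub.1
  obtain ⟨s, hs⟩ := hS (a * h) h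
  have hsah : s * a * h ∈ H := by rw [mul_assoc, hs]; exact hh
  have hsbh : s * b * h ∈ H := (hab s h).mp hsah
  have hahN : a * h ∈ N := hNsub.2 a haN h (hHN hh)
  have hsN : s ∈ N := hNuni.2 s (a * h) (by rw [← mul_assoc]; exact hHN hsah) hahN
  have hbhN : b * h ∈ N := hNuni.1 s (b * h) (by rw [← mul_assoc]; exact hHN hsbh) hsN
  exact hNuni.2 b h hbhN (hHN hh)
end

section
/- Let S be a left simple semigroup, H a reflexive unitary subsemigroup of S, and N a unitary subsemigroup of S with H ⊆ N. Then the restriction of the principal congruence P_H(S) to N equals the principal congruence P_H(N) determined by H within the semigroup N. -/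
open Pointwise

lemma prinCong_key {S : Type*} [Semigroup S] (H N : Set S)
    (hHsub : IsSubsemigroup H) (hHrefl : IsReflexive H) (hHuni : IsUnitary H)
    (hNuni : IsUnitary N) (hHN : H ⊆ N)
    {a b : S} (ha : a ∈ N) (_hb : b ∈ N)
    (cond : ∀ s ∈ N, ∀ t ∈ N, (s * a * t ∈ H ↔ s * b * t ∈ H))
    (s t : S) (hsat : s * a * t ∈ H) : s * b * t ∈ H := by
  obtain ⟨e, he⟩ := hHsub.1
  -- a * (t * s) ∈ H
  have h1 : a * (t * s) ∈ H := by
    have := hHrefl s (a * t) (by rwa [mul_assoc] at hsat)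
    rwa [mul_assoc] at this
  -- t * s ∈ N
  have hts : t * s ∈ N := hNuni.2 (t * s) a (hHN (hHrefl a (t * s) h1)) ha
  -- e * a * (t * s) ∈ H
  have h2 : e * a * (t * s) ∈ H := by
    rw [mul_assoc]; exact hHsub.2 e he _ h1
  have h3 : e * b * (t * s) ∈ H := (cond e (hHN he) (t * s) hts).mp h2
  have h4 : b * (t * s) ∈ H := hHuni.1 e _ (by rwa [mul_assoc] at h3) he
  have h5 : t * (s * b) ∈ H := by
    have := hHrefl b (t * s) h4
    rwa [mul_assoc] at this
  exact hHrefl t (s * b) h5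

/-- If `H ⊆ N` with `H` reflexive unitary and `N` unitary in a left simple
semigroup `S`, then the restriction of `P_H(S)` to `N` is the principal
congruence `P_H(N)` of the semigroup `N`. -/
theorem prinCong_restriction_eq {S : Type*} [Semigroup S]
    (hS : LeftSimple S) (H N : Set S)
    (hHsub : IsSubsemigroup H) (hHrefl : IsReflexive H) (hHuni : IsUnitary H)
    (hNsub : IsSubsemigroup N) (hNuni : IsUnitary N) (hHN : H ⊆ N) :
    ∀ a ∈ N, ∀ b ∈ N,
      (PrinCong H a b ↔ ∀ s ∈ N, ∀ t ∈ N, (s * a * t ∈ H ↔ s * b * t ∈ H)) := by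
  intro a ha b hb
  constructor
  · intro hp s _ t _
    exact hp s t
  · intro cond s t
    constructor
    · exact prinCong_key H N hHsub hHrefl hHuni hNuni hHN ha hb cond s t
    · exact prinCong_key H N hHsub hHrefl hHuni hNuni hHN hb ha
        (fun s hs t ht => (cond s hs t ht).symm) s t
end

section
/- Let S be a left simple semigroup, H a reflexive unitary subsemigroup, and N a unitary subsemigroup with H ⊆ N. Then the image N/P_H of N in the group S/P_H is a subgroup of S/P_H. -/
open Pointwise

/-- If `H ⊆ N` with `H` reflexive unitary and `N` unitary in a left simple
semigroup `S`, then the image `N/P_H` of `N` in the group `S/P_H` is a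
subgroup. -/
theorem image_of_unitary_is_subgroup {S : Type*} [Semigroup S]
    (hS : LeftSimple S) (H N : Set S)
    (hHsub : IsSubsemigroup H) (hHrefl : IsReflexive H) (hHuni : IsUnitary H)
    (hNsub : IsSubsemigroup N) (hNuni : IsUnitary N) (hHN : H ⊆ N)
    {G : Type*} [Group G] (f : S → G) (hf : IsQuotientGroupBy H f) :
    (1 : G) ∈ {g : G | ∃ n ∈ N, f n = g} ∧
    (∀ g₁ ∈ {g : G | ∃ n ∈ N, f n = g}, ∀ g₂ ∈ {g : G | ∃ n ∈ N, f n = g},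
      g₁ * g₂ ∈ {g : G | ∃ n ∈ N, f n = g}) ∧
    (∀ g ∈ {g : G | ∃ n ∈ N, f n = g}, g⁻¹ ∈ {g : G | ∃ n ∈ N, f n = g}) := by
  obtain ⟨hsurj, hmul, hcong, hmem⟩ := hf
  obtain ⟨h, hh⟩ := hHsub.1
  refine ⟨⟨h, hHN hh, (hmem h).1 hh⟩, ?_, ?_⟩
  · rintro g₁ ⟨n₁, hn₁, rfl⟩ g₂ ⟨n₂, hn₂, rfl⟩
    exact ⟨n₁ * n₂, hNsub.2 n₁ hn₁ n₂ hn₂, hmul n₁ n₂⟩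
  · rintro g ⟨n, hn, rfl⟩
    obtain ⟨s, hs⟩ := hS n h
    have hsnH : s * n ∈ H := hs ▸ hh
    have hsN : s ∈ N := hNuni.2 s n (hHN hsnH) hn
    refine ⟨s, hsN, ?_⟩
    have : f s * f n = 1 := by rw [← hmul]; exact (hmem _).1 hsnH
    exact eq_inv_of_mul_eq_one_left this
end

section
/- Let S be a semigroup, H a reflexive unitary subsemigroup of S, and N a subsemigroup of S with H ∩ N ≠ ∅. Then the semigroup ⟨H, N⟩ generated by H ∪ N, factored by the principal congruence P_H, is isomorphic to N/P_{H∩N}, the factor of N by the principal congruence determined by H ∩ N in N. -/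
open Pointwise

/-- The principal congruence on a semigroup `M` determined by `H`, as a
bundled congruence. -/
def prinCon (M : Type*) [Semigroup M] (H : Set M) : Con M where
  r a b := ∀ s t : M, s * a * t ∈ H ↔ s * b * t ∈ H
  iseqv := ⟨fun _ _ _ => Iff.rfl, fun h s t => (h s t).symm,
    fun h₁ h₂ s t => (h₁ s t).trans (h₂ s t)⟩
  mul' := by
    intro a b c d hab hcd s t
    have h₁ : s * (a * c) * t ∈ H ↔ s * (b * c) * t ∈ H := by
      have := hab s (c * t); simpa [mul_assoc] using this
    have h₂ : s * (b * c) * t ∈ H ↔ s * (b * d) * t ∈ H := by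
      have := hcd (s * b) t; simpa [mul_assoc] using this
    exact h₁.trans h₂

/-- Strong equivalence: `a` and `b` behave the same w.r.t. `H` in all contexts. -/
def SRel {S : Type*} [Mul S] (H : Set S) (a b : S) : Prop :=
  (∀ s t : S, s * a * t ∈ H ↔ s * b * t ∈ H) ∧
  (∀ s : S, s * a ∈ H ↔ s * b ∈ H) ∧
  (∀ t : S, a * t ∈ H ↔ b * t ∈ H) ∧
  (a ∈ H ↔ b ∈ H)

theorem SRel.rfl' {S : Type*} [Mul S] {H : Set S} {a : S} : SRel H a a :=
  ⟨fun _ _ => Iff.rfl, fun _ => Iff.rfl, fun _ => Iff.rfl, Iff.rfl⟩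

theorem SRel.symm' {S : Type*} [Mul S] {H : Set S} {a b : S} (h : SRel H a b) :
    SRel H b a :=
  ⟨fun s t => (h.1 s t).symm, fun s => (h.2.1 s).symm, fun t => (h.2.2.1 t).symm,
    h.2.2.2.symm⟩

theorem SRel.trans' {S : Type*} [Mul S] {H : Set S} {a b c : S}
    (h : SRel H a b) (h' : SRel H b c) : SRel H a c :=
  ⟨fun s t => (h.1 s t).trans (h'.1 s t), fun s => (h.2.1 s).trans (h'.2.1 s),
    fun t => (h.2.2.1 t).trans (h'.2.2.1 t), h.2.2.2.trans h'.2.2.2⟩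

theorem del_right {S : Type*} [Semigroup S] {H : Set S}
    (hHsub : IsSubsemigroup H) (hHuni : IsUnitary H) {h : S} (hh : h ∈ H) :
    ∀ s : S, s * h ∈ H ↔ s ∈ H := fun s =>
  ⟨fun hm => hHuni.2 s h hm hh, fun hs => hHsub.2 s hs h hh⟩

theorem del_left {S : Type*} [Semigroup S] {H : Set S}
    (hHsub : IsSubsemigroup H) (hHuni : IsUnitary H) {h : S} (hh : h ∈ H) :
    ∀ t : S, h * t ∈ H ↔ t ∈ H := fun t =>
  ⟨fun hm => hHuni.1 h t hm hh, fun ht => hHsub.2 h hh t ht⟩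

theorem del_mid {S : Type*} [Semigroup S] {H : Set S}
    (hHsub : IsSubsemigroup H) (hHrefl : IsReflexive H) (hHuni : IsUnitary H)
    {h : S} (hh : h ∈ H) :
    ∀ s t : S, s * h * t ∈ H ↔ s * t ∈ H := by
  intro s t
  constructor
  · intro hm
    have h1 : t * (s * h) ∈ H := hHrefl _ _ hm
    have h2 : t * s * h ∈ H := by rwa [mul_assoc]
    exact hHrefl _ _ ((del_right hHsub hHuni hh _).mp h2)
  · intro hm
    have h1 : t * s ∈ H := hHrefl _ _ hm
    have h2 : t * s * h ∈ H := (del_right hHsub hHuni hh _).mpr h1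
    have h3 : t * (s * h) ∈ H := by rwa [mul_assoc] at h2
    exact hHrefl _ _ h3

theorem SRel_of_mem {S : Type*} [Semigroup S] {H : Set S}
    (hHsub : IsSubsemigroup H) (hHrefl : IsReflexive H) (hHuni : IsUnitary H)
    {h b : S} (hh : h ∈ H) (hb : b ∈ H) : SRel H h b :=
  ⟨fun s t => (del_mid hHsub hHrefl hHuni hh s t).trans
      (del_mid hHsub hHrefl hHuni hb s t).symm,
   fun s => (del_right hHsub hHuni hh s).trans (del_right hHsub hHuni hb s).symm,
   fun t => (del_left hHsub hHuni hh t).trans (del_left hHsub hHuni hb t).symm,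
   iff_of_true hh hb⟩

theorem SRel_mul {S : Type*} [Semigroup S] {H : Set S} {a a' b b' : S}
    (ha : SRel H a a') (hb : SRel H b b') : SRel H (a * b) (a' * b') := by
  obtain ⟨ha1, ha2, ha3, ha4⟩ := ha
  obtain ⟨hb1, hb2, hb3, hb4⟩ := hb
  refine ⟨fun s t => ?_, fun s => ?_, fun t => ?_, ?_⟩
  · have h1 := ha1 s (b * t)
    have h2 := hb1 (s * a') t
    simp only [mul_assoc] at h1 h2 ⊢
    exact h1.trans h2
  · have h1 := ha1 s b
    have h2 := hb2 (s * a')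
    simp only [mul_assoc] at h1 h2 ⊢
    exact h1.trans h2
  · have h1 := ha3 (b * t)
    have h2 := hb1 a' t
    simp only [mul_assoc] at h1 h2 ⊢
    exact h1.trans h2
  · exact (ha3 b).trans (hb2 a')

theorem stepA {S : Type*} [Semigroup S] {H : Set S}
    (hHsub : IsSubsemigroup H) (hHrefl : IsReflexive H) (hHuni : IsUnitary H)
    {N : Subsemigroup S} {e : S} (heH : e ∈ H) (heN : e ∈ N) :
    ∀ a ∈ Subsemigroup.closure (H ∪ (N : Set S)), ∃ n ∈ N, SRel H a n := by
  intro a ha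
  induction ha using Subsemigroup.closure_induction with
  | mem x hx =>
    rcases hx with hx | hx
    · exact ⟨e, heN, SRel_of_mem hHsub hHrefl hHuni hx heH⟩
    · exact ⟨x, hx, SRel.rfl'⟩
  | mul x y hx hy ihx ihy =>
    obtain ⟨nx, hnx, hrx⟩ := ihx
    obtain ⟨ny, hny, hry⟩ := ihy
    exact ⟨nx * ny, mul_mem hnx hny, SRel_mul hrx hry⟩

/-- If `H` is a reflexive unitary subsemigroup of a semigroup `S` and `N` a
subsemigroup with `H ∩ N ≠ ∅`, then `⟨H,N⟩/P_H ≅ N/P_{H∩N}`. -/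
theorem gen_quotient_iso {S : Type*} [Semigroup S] (H : Set S)
    (hHsub : IsSubsemigroup H) (hHrefl : IsReflexive H) (hHuni : IsUnitary H)
    (N : Subsemigroup S) (hHN : (H ∩ (N : Set S)).Nonempty) :
    Nonempty
      ((prinCon (Subsemigroup.closure (H ∪ (N : Set S)))
          {x : Subsemigroup.closure (H ∪ (N : Set S)) | (x : S) ∈ H}).Quotient
        ≃*
       (prinCon N {x : N | (x : S) ∈ H ∩ (N : Set S)}).Quotient) := by
  classical
  obtain ⟨e, heH, heN⟩ := hHN
  set T := Subsemigroup.closure (H ∪ (N : Set S)) with hTdef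
  have hNT : ∀ x : S, x ∈ N → x ∈ T :=
    fun x hx => Subsemigroup.subset_closure (Or.inr hx)
  set cT := prinCon T {x : T | (x : S) ∈ H} with hcT
  set cN := prinCon N {x : N | (x : S) ∈ H ∩ (N : Set S)} with hcN
  choose nmap hnN hrel using fun a : T =>
    stepA hHsub hHrefl hHuni heH heN (a : S) a.2
  -- ι : N → T
  let ι : N → T := fun x => ⟨(x : S), hNT _ x.2⟩
  -- (iv) : SRel between elements of N gives cN
  have toCN : ∀ x y : N, SRel H (x : S) (y : S) → cN x y := by
    intro x y hxy s t
    show ((s * x * t : N) : S) ∈ H ∩ (N : Set S) ↔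
         ((s * y * t : N) : S) ∈ H ∩ (N : Set S)
    constructor
    · rintro ⟨h1, -⟩
      exact ⟨(hxy.1 (s : S) (t : S)).mp h1, (s * y * t).2⟩
    · rintro ⟨h1, -⟩
      exact ⟨(hxy.1 (s : S) (t : S)).mpr h1, (s * x * t).2⟩
  -- (i) : cN implies cT of the images
  have cN_to_cT : ∀ x y : N, cN x y → cT (ι x) (ι y) := by
    intro x y hxy s t
    show ((s : T) : S) * (x : S) * ((t : T) : S) ∈ H ↔
         ((s : T) : S) * (y : S) * ((t : T) : S) ∈ H
    have hs := hrel s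
    have ht := hrel t
    have e1 : ((s : T) : S) * (x : S) * ((t : T) : S) ∈ H ↔
        nmap s * (x : S) * ((t : T) : S) ∈ H := by
      have := hs.2.2.1 ((x : S) * ((t : T) : S))
      simpa [mul_assoc] using this
    have e2 : nmap s * (x : S) * ((t : T) : S) ∈ H ↔
        nmap s * (x : S) * nmap t ∈ H := ht.2.1 (nmap s * (x : S))
    have e1' : ((s : T) : S) * (y : S) * ((t : T) : S) ∈ H ↔
        nmap s * (y : S) * ((t : T) : S) ∈ H := by
      have := hs.2.2.1 ((y : S) * ((t : T) : S))
      simpa [mul_assoc] using this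
    have e2' : nmap s * (y : S) * ((t : T) : S) ∈ H ↔
        nmap s * (y : S) * nmap t ∈ H := ht.2.1 (nmap s * (y : S))
    have e3 : nmap s * (x : S) * nmap t ∈ H ↔ nmap s * (y : S) * nmap t ∈ H := by
      have h4 := hxy ⟨nmap s, hnN s⟩ ⟨nmap t, hnN t⟩
      have h4' : nmap s * (x : S) * nmap t ∈ H ∩ (N : Set S) ↔
          nmap s * (y : S) * nmap t ∈ H ∩ (N : Set S) := h4
      constructor
      · intro hm
        exact (h4'.mp ⟨hm, mul_mem (mul_mem (hnN s) x.2) (hnN t)⟩).1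
      · intro hm
        exact (h4'.mpr ⟨hm, mul_mem (mul_mem (hnN s) y.2) (hnN t)⟩).1
    exact e1.trans (e2.trans (e3.trans (e2'.symm.trans e1'.symm)))
  -- (ii) : cT gives cN of the chosen representatives
  have wd : ∀ a b : T, cT a b →
      cN ⟨nmap a, hnN a⟩ ⟨nmap b, hnN b⟩ := by
    intro a b hab s t
    have h1 : ((s : N) : S) * nmap a * ((t : N) : S) ∈ H ↔
        ((s : N) : S) * (a : S) * ((t : N) : S) ∈ H :=
      ((hrel a).1 (s : S) (t : S)).symm
    have h2 : ((s : N) : S) * (a : S) * ((t : N) : S) ∈ H ↔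
        ((s : N) : S) * (b : S) * ((t : N) : S) ∈ H :=
      hab (ι s) (ι t)
    have h3 : ((s : N) : S) * (b : S) * ((t : N) : S) ∈ H ↔
        ((s : N) : S) * nmap b * ((t : N) : S) ∈ H :=
      (hrel b).1 (s : S) (t : S)
    have ee := (h1.trans h2).trans h3
    show ((s : N) : S) * nmap a * ((t : N) : S) ∈ H ∩ (N : Set S) ↔
         ((s : N) : S) * nmap b * ((t : N) : S) ∈ H ∩ (N : Set S)
    exact ⟨fun hm => ⟨ee.mp hm.1, mul_mem (mul_mem s.2 (hnN b)) t.2⟩,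
           fun hm => ⟨ee.mpr hm.1, mul_mem (mul_mem s.2 (hnN a)) t.2⟩⟩
  -- (iii)
  have cT_n : ∀ a : T, cT a (ι ⟨nmap a, hnN a⟩) := by
    intro a s t
    exact (hrel a).1 (s : S) (t : S)
  -- the forward map
  let F : cT.Quotient → cN.Quotient := fun q =>
    Quotient.liftOn' q (fun a : T => ((⟨nmap a, hnN a⟩ : N) : cN.Quotient))
      (fun a b hab => (cN.eq).mpr (wd a b hab))
  let Gm : cN.Quotient → cT.Quotient := fun q =>
    Quotient.liftOn' q (fun x : N => ((ι x : T) : cT.Quotient))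
      (fun x y hxy => (cT.eq).mpr (cN_to_cT x y hxy))
  refine ⟨{ toFun := F, invFun := Gm, left_inv := ?_, right_inv := ?_,
            map_mul' := ?_ }⟩
  · intro q
    induction q using Quotient.inductionOn' with
    | h a =>
      have : Gm (F ((a : cT.Quotient))) = ((ι ⟨nmap a, hnN a⟩ : T) : cT.Quotient) := rfl
      rw [show Quotient.mk'' a = (a : cT.Quotient) from rfl, this]
      exact (cT.eq).mpr (cT.symm (cT_n a))
  · intro q
    induction q using Quotient.inductionOn' with
    | h x =>
      have : F (Gm ((x : cN.Quotient))) =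
          ((⟨nmap (ι x), hnN (ι x)⟩ : N) : cN.Quotient) := rfl
      rw [show Quotient.mk'' x = (x : cN.Quotient) from rfl, this]
      exact (cN.eq).mpr (toCN _ _ ((hrel (ι x)).symm'))
  · intro q r
    induction q using Quotient.inductionOn' with
    | h a =>
      induction r using Quotient.inductionOn' with
      | h b =>
        rw [show Quotient.mk'' a = (a : cT.Quotient) from rfl,
            show Quotient.mk'' b = (b : cT.Quotient) from rfl, ← Con.coe_mul]
        show ((⟨nmap (a * b), hnN (a * b)⟩ : N) : cN.Quotient) =
          ((⟨nmap a, hnN a⟩ : N) : cN.Quotient) * ((⟨nmap b, hnN b⟩ : N) : cN.Quotient)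
        rw [← Con.coe_mul]
        refine (cN.eq).mpr (toCN _ _ ?_)
        have h1 : SRel H ((a * b : T) : S) (nmap (a * b)) := hrel (a * b)
        have h2 : SRel H ((a * b : T) : S) (nmap a * nmap b) :=
          SRel_mul (hrel a) (hrel b)
        exact h1.symm'.trans' h2
end

section
/- Let S be a left simple semigroup and H, N unitary subsemigroups of S with H reflexive in S. Then H ∩ N is nonempty. -/
open Pointwise

/-- If `H` and `N` are unitary subsemigroups of a left simple semigroup `S`
with `H` reflexive in `S`, then `H ∩ N` is nonempty. -/
theorem inter_nonempty {S : Type*} [Semigroup S] (hS : LeftSimple S)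
    (H N : Set S) (hHsub : IsSubsemigroup H) (hHuni : IsUnitary H)
    (hHrefl : IsReflexive H) (hNsub : IsSubsemigroup N) (hNuni : IsUnitary N) :
    (H ∩ N).Nonempty := by
  obtain ⟨n, hn⟩ := hNsub.1
  obtain ⟨h, hh⟩ := hHsub.1
  obtain ⟨e, he⟩ := hS n n
  obtain ⟨s, hs⟩ := hS n h
  have hsn : s * n ∈ H := by rw [hs]; exact hh
  have hns : n * s ∈ H := hHrefl _ _ hsn
  have heN : e ∈ N := hNuni.2 e n (by rw [he]; exact hn) hn
  have h1 : (s * e) * n ∈ H := by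
    rw [mul_assoc, he]; exact hsn
  have h2 : (n * s) * e ∈ H := by
    have := hHrefl _ _ h1
    rwa [← mul_assoc] at this
  exact ⟨e, hHuni.1 (n * s) e h2 hns, heN⟩
end

section
/- Let S be a left simple semigroup and H, N unitary subsemigroups of S with H reflexive in S. Then the subsemigroup ⟨H, N⟩ generated by H ∪ N is unitary in S and equals the set product HN = {hn : h ∈ H, n ∈ N}. -/
open Pointwise

/-- If `H` and `N` are unitary subsemigroups of a left simple semigroup `S`
with `H` reflexive in `S`, then `⟨H, N⟩` is unitary in `S` and `⟨H,N⟩ = HN`. -/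
theorem gen_unitary_eq_prod {S : Type*} [Semigroup S] (hS : LeftSimple S)
    (H N : Set S) (hHsub : IsSubsemigroup H) (hHuni : IsUnitary H)
    (hHrefl : IsReflexive H) (hNsub : IsSubsemigroup N) (hNuni : IsUnitary N) :
    IsUnitary ((Subsemigroup.closure (H ∪ N) : Subsemigroup S) : Set S) ∧
      ((Subsemigroup.closure (H ∪ N) : Subsemigroup S) : Set S) = H * N := by
  obtain ⟨⟨h0, hh0⟩, Hmul⟩ := hHsub
  obtain ⟨⟨n0, hn0⟩, Nmul⟩ := hNsub
  -- L1 : every element has a "left and right inverse into H"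
  have L1 : ∀ a : S, ∃ x : S, x * a ∈ H ∧ a * x ∈ H := by
    intro a
    obtain ⟨x, hx⟩ := hS a h0
    have hxa : x * a ∈ H := by rw [hx]; exact hh0
    exact ⟨x, hxa, hHrefl x a hxa⟩
  -- L2 : elements of H can be moved from right to left
  have L2 : ∀ a : S, ∀ h ∈ H, ∃ h' ∈ H, a * h = h' * a := by
    intro a h hh
    obtain ⟨x, hxa, hax⟩ := L1 a
    obtain ⟨s, hs⟩ := hS a (a * h)
    have h1 : x * (s * a) ∈ H := by
      rw [hs, ← mul_assoc]; exact Hmul _ hxa _ hh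
    have h2 : (s * a) * x ∈ H := hHrefl _ _ h1
    have h3 : s * (a * x) ∈ H := by rw [← mul_assoc]; exact h2
    exact ⟨s, hHuni.2 s (a * x) h3 hax, hs.symm⟩
  -- L3 : H ∩ N is nonempty
  obtain ⟨k, hkH, hkN⟩ : ∃ k, k ∈ H ∧ k ∈ N := by
    obtain ⟨s, hs⟩ := hS (h0 * n0) n0
    have hshN : s * h0 ∈ N := by
      apply hNuni.2 (s * h0) n0 _ hn0
      rw [mul_assoc, hs]; exact hn0
    obtain ⟨u, hun, hnu⟩ := L1 n0
    have h1 : (u * (s * h0)) * n0 ∈ H := by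
      rw [mul_assoc, mul_assoc, hs]; exact hun
    have h2 : n0 * (u * (s * h0)) ∈ H := hHrefl _ _ h1
    have h3 : (n0 * u) * (s * h0) ∈ H := by rw [mul_assoc]; exact h2
    exact ⟨s * h0, hHuni.1 _ _ h3 hnu, hshN⟩
  -- L4 : elements of N have inverses into H within N
  have L4 : ∀ n ∈ N, ∃ s ∈ N, s * n ∈ H ∧ n * s ∈ H := by
    intro n hn
    obtain ⟨s, hs⟩ := hS n k
    have hsnH : s * n ∈ H := by rw [hs]; exact hkH
    have hsN : s ∈ N := hNuni.2 s n (by rw [hs]; exact hkN) hn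
    exact ⟨s, hsN, hsnH, hHrefl _ _ hsnH⟩
  -- L5 : if a*m ∈ H with m ∈ N, then a ∈ H*N
  have L5 : ∀ a m : S, m ∈ N → a * m ∈ H → a ∈ H * N := by
    intro a m hm ham
    obtain ⟨s, hsN, hsm, -⟩ := L4 m hm
    obtain ⟨h, hh⟩ := hS s a
    have h1 : h * (s * m) ∈ H := by rw [← mul_assoc, hh]; exact ham
    have hhH : h ∈ H := hHuni.2 h (s * m) h1 hsm
    exact hh ▸ Set.mul_mem_mul hhH hsN
  -- H*N is closed under multiplication
  have HNmul : ∀ x ∈ H * N, ∀ y ∈ H * N, x * y ∈ H * N := by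
    rintro x ⟨h1, hh1, m1, hm1, rfl⟩ y ⟨h2, hh2, m2, hm2, rfl⟩
    obtain ⟨h', hh', heq⟩ := L2 m1 h2 hh2
    have key : h1 * m1 * (h2 * m2) = (h1 * h') * (m1 * m2) := by
      rw [← mul_assoc, mul_assoc h1 m1 h2, heq]
      simp [mul_assoc]
    rw [key]
    exact Set.mul_mem_mul (Hmul _ hh1 _ hh') (Nmul _ hm1 _ hm2)
  have HsubHN : H ⊆ H * N := by
    intro h hh
    obtain ⟨h1, hh1⟩ := hS k h
    have hh1H : h1 ∈ H := hHuni.2 h1 k (by rw [hh1]; exact hh) hkH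
    exact hh1 ▸ Set.mul_mem_mul hh1H hkN
  have NsubHN : N ⊆ H * N := by
    intro n hn
    obtain ⟨v, hv⟩ := hS k n
    have hvN : v ∈ N := hNuni.2 v k (by rw [hv]; exact hn) hkN
    obtain ⟨h', hh', heq⟩ := L2 v k hkH
    have : h' * v ∈ H * N := Set.mul_mem_mul hh' hvN
    rw [← heq, hv] at this
    exact this
  have hset : ((Subsemigroup.closure (H ∪ N) : Subsemigroup S) : Set S) = H * N := by
    apply Set.Subset.antisymm
    · have hle : Subsemigroup.closure (H ∪ N) ≤
          ⟨H * N, fun {a b} ha hb => HNmul a ha b hb⟩ := by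
        rw [Subsemigroup.closure_le]
        rintro x (hx | hx)
        exacts [HsubHN hx, NsubHN hx]
      intro x hx
      exact hle hx
    · rintro x ⟨h, hh, n, hn, rfl⟩
      exact Subsemigroup.mul_mem _ (Subsemigroup.subset_closure (Or.inl hh))
        (Subsemigroup.subset_closure (Or.inr hn))
  have uni : IsUnitary (H * N) := by
    constructor
    · rintro a b hab ha
      obtain ⟨h, hh, n, hn, heq⟩ := hab
      obtain ⟨h1, hh1, n1, hn1, heq1⟩ := ha
      obtain ⟨m, hmN, -, hnm⟩ := L4 n hn
      have e1 : (a * b) * m ∈ H := by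
        rw [← heq, mul_assoc]; exact Hmul _ hh _ hnm
      have e2 : h1 * (n1 * (b * m)) ∈ H := by
        have : h1 * (n1 * (b * m)) = (a * b) * m := by
          rw [← heq1]; simp [mul_assoc]
        rw [this]; exact e1
      have e3 : n1 * (b * m) ∈ H := hHuni.1 _ _ e2 hh1
      have e4 : (b * m) * n1 ∈ H := hHrefl _ _ e3
      have e5 : b * (m * n1) ∈ H := by rw [← mul_assoc]; exact e4
      exact L5 b (m * n1) (Nmul _ hmN _ hn1) e5
    · rintro a b hab hb
      obtain ⟨h, hh, n, hn, heq⟩ := hab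
      obtain ⟨h1, hh1, n1, hn1, heq1⟩ := hb
      obtain ⟨m, hmN, -, hnm⟩ := L4 n hn
      have e1 : (a * b) * m ∈ H := by
        rw [← heq, mul_assoc]; exact Hmul _ hh _ hnm
      obtain ⟨h2, hh2, heq2⟩ := L2 a h1 hh1
      have e2 : h2 * (a * (n1 * m)) ∈ H := by
        have : h2 * (a * (n1 * m)) = (a * b) * m := by
          rw [← mul_assoc, ← heq2, ← heq1]; simp [mul_assoc]
        rw [this]; exact e1
      have e3 : a * (n1 * m) ∈ H := hHuni.1 _ _ e2 hh2
      exact L5 a (n1 * m) (Nmul _ hn1 _ hmN) e3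
  rw [hset]
  exact ⟨uni, rfl⟩
end

section
/- Let S be a left simple semigroup and H, N both reflexive unitary subsemigroups of S. Then HN = NH = ⟨H, N⟩ and this set is a reflexive unitary subsemigroup of S. -/
open Pointwise

namespace RUAux

variable {S : Type*} [Semigroup S]

/-- Congruence mod `H`: the two elements lie in the same class. -/
def Rel (H : Set S) (x y : S) : Prop := ∃ p, p * x ∈ H ∧ p * y ∈ H

variable {H : Set S}

lemma qinv (hS : LeftSimple S) (hne : H.Nonempty) (hrefl : IsReflexive H)
    (a : S) : ∃ b, b * a ∈ H ∧ a * b ∈ H := by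
  obtain ⟨h, hh⟩ := hne
  obtain ⟨s, hs⟩ := hS a h
  have h1 : s * a ∈ H := by rw [hs]; exact hh
  exact ⟨s, h1, hrefl _ _ h1⟩

lemma rel_refl (hS : LeftSimple S) (hne : H.Nonempty) (hrefl : IsReflexive H)
    (x : S) : Rel H x x := by
  obtain ⟨b, hb, -⟩ := qinv hS hne hrefl x
  exact ⟨b, hb, hb⟩

lemma rel_symm {x y : S} (h : Rel H x y) : Rel H y x := by
  obtain ⟨p, h1, h2⟩ := h; exact ⟨p, h2, h1⟩

lemma rel_trans (hmul : ∀ a ∈ H, ∀ b ∈ H, a * b ∈ H) (hrefl : IsReflexive H)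
    {x y z : S} (h1 : Rel H x y) (h2 : Rel H y z) : Rel H x z := by
  obtain ⟨p, hpx, hpy⟩ := h1
  obtain ⟨q, hqy, hqz⟩ := h2
  refine ⟨q * y * p, ?_, ?_⟩
  · have : (q * y) * (p * x) ∈ H := hmul _ hqy _ hpx
    simpa [mul_assoc] using this
  · have hyp : y * p ∈ H := hrefl _ _ hpy
    have hzq : z * q ∈ H := hrefl _ _ hqz
    have h3 : (y * p) * (z * q) ∈ H := hmul _ hyp _ hzq
    have h4 : (y * (p * z)) * q ∈ H := by simpa [mul_assoc] using h3
    have h5 := hrefl _ _ h4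
    simpa [mul_assoc] using h5

lemma rel_congr_left (hS : LeftSimple S) (hne : H.Nonempty)
    (hmul : ∀ a ∈ H, ∀ b ∈ H, a * b ∈ H) (hrefl : IsReflexive H)
    (c : S) {x y : S} (h : Rel H x y) : Rel H (c * x) (c * y) := by
  obtain ⟨p, hpx, hpy⟩ := h
  obtain ⟨c', hc'c, -⟩ := qinv hS hne hrefl c
  refine ⟨p * c', ?_, ?_⟩
  · have hxp : x * p ∈ H := hrefl _ _ hpx
    have h3 : (c' * c) * (x * p) ∈ H := hmul _ hc'c _ hxp
    have h4 : (c' * (c * x)) * p ∈ H := by simpa [mul_assoc] using h3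
    have h5 := hrefl _ _ h4
    simpa [mul_assoc] using h5
  · have hyp : y * p ∈ H := hrefl _ _ hpy
    have h3 : (c' * c) * (y * p) ∈ H := hmul _ hc'c _ hyp
    have h4 : (c' * (c * y)) * p ∈ H := by simpa [mul_assoc] using h3
    have h5 := hrefl _ _ h4
    simpa [mul_assoc] using h5

lemma rel_congr_right (hS : LeftSimple S) (hne : H.Nonempty)
    (hmul : ∀ a ∈ H, ∀ b ∈ H, a * b ∈ H) (hrefl : IsReflexive H)
    (c : S) {x y : S} (h : Rel H x y) : Rel H (x * c) (y * c) := by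
  obtain ⟨p, hpx, hpy⟩ := h
  obtain ⟨c', -, hcc'⟩ := qinv hS hne hrefl c
  refine ⟨c' * p, ?_, ?_⟩
  · have h3 : (p * x) * (c * c') ∈ H := hmul _ hpx _ hcc'
    have h4 : (p * (x * c)) * c' ∈ H := by simpa [mul_assoc] using h3
    have h5 := hrefl _ _ h4
    simpa [mul_assoc] using h5
  · have h3 : (p * y) * (c * c') ∈ H := hmul _ hpy _ hcc'
    have h4 : (p * (y * c)) * c' ∈ H := by simpa [mul_assoc] using h3
    have h5 := hrefl _ _ h4
    simpa [mul_assoc] using h5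

lemma rel_mem (huni : IsUnitary H) {x y : S} (h : Rel H x y) (hx : x ∈ H) :
    y ∈ H := by
  obtain ⟨p, hpx, hpy⟩ := h
  exact huni.1 _ _ hpy (huni.2 _ _ hpx hx)

lemma rel_mul_left (hS : LeftSimple S) (hne : H.Nonempty)
    (hmul : ∀ a ∈ H, ∀ b ∈ H, a * b ∈ H) (hrefl : IsReflexive H)
    {e : S} (he : e ∈ H) (x : S) : Rel H (e * x) x := by
  obtain ⟨x', hx'x, hxx'⟩ := qinv hS hne hrefl x
  refine ⟨x', ?_, hx'x⟩
  have h3 : e * (x * x') ∈ H := hmul _ he _ hxx'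
  have h4 : (e * x) * x' ∈ H := by simpa [mul_assoc] using h3
  have h5 := hrefl _ _ h4
  simpa [mul_assoc] using h5

lemma rel_mul_right (hS : LeftSimple S) (hne : H.Nonempty)
    (hmul : ∀ a ∈ H, ∀ b ∈ H, a * b ∈ H) (hrefl : IsReflexive H)
    {e : S} (he : e ∈ H) (x : S) : Rel H (x * e) x := by
  obtain ⟨x', hx'x, hxx'⟩ := qinv hS hne hrefl x
  refine ⟨x', ?_, hx'x⟩
  have h3 : (x' * x) * e ∈ H := hmul _ hx'x _ he
  simpa [mul_assoc] using h3

/-- The "move" lemma: `x * a = s * x` for some `s ∈ A`. -/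
lemma move (hS : LeftSimple S) {A : Set S} (hne : A.Nonempty)
    (hmul : ∀ a ∈ A, ∀ b ∈ A, a * b ∈ A) (hrefl : IsReflexive A)
    (huni : IsUnitary A) (x : S) {a : S} (ha : a ∈ A) :
    ∃ s ∈ A, x * a = s * x := by
  obtain ⟨k, hkx, hxk⟩ := qinv hS hne hrefl x
  obtain ⟨s, hs⟩ := hS x (x * a)
  have h1 : (k * s) * x ∈ A := by
    have h0 : k * (s * x) ∈ A := by
      rw [hs]
      have := hmul _ hkx _ ha
      simpa [mul_assoc] using this
    simpa [mul_assoc] using h0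
  have h2 := hrefl _ _ h1
  have h3 : (x * k) * s ∈ A := by simpa [mul_assoc] using h2
  exact ⟨s, huni.1 _ _ h3 hxk, hs.symm⟩

end RUAux

/-- If `H` and `N` are reflexive unitary subsemigroups of a left simple
semigroup `S`, then `HN = NH = ⟨H, N⟩` is a reflexive unitary subsemigroup
of `S`. -/
theorem prod_reflexive_unitary {S : Type*} [Semigroup S] (hS : LeftSimple S)
    (H N : Set S) (hHsub : IsSubsemigroup H) (hHuni : IsUnitary H)
    (hHrefl : IsReflexive H) (hNsub : IsSubsemigroup N) (hNuni : IsUnitary N)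
    (hNrefl : IsReflexive N) :
    H * N = N * H ∧
    ((Subsemigroup.closure (H ∪ N) : Subsemigroup S) : Set S) = H * N ∧
    IsSubsemigroup (H * N) ∧ IsReflexive (H * N) ∧ IsUnitary (H * N) := by
  obtain ⟨hHne, hHmul⟩ := hHsub
  obtain ⟨hNne, hNmul⟩ := hNsub
  -- An element of `H ∩ N`.
  obtain ⟨n₀, hn₀⟩ := hNne
  obtain ⟨s₀, hs₀⟩ := hS n₀ n₀
  have hs₀N : s₀ ∈ N := hNuni.2 _ _ (by rw [hs₀]; exact hn₀) hn₀
  obtain ⟨m₀, hmn₀, hn₀m⟩ := RUAux.qinv hS hHne hHrefl n₀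
  have hs₀H : s₀ ∈ H := by
    have h1 : (m₀ * s₀) * n₀ ∈ H := by
      have h0 : m₀ * (s₀ * n₀) ∈ H := by rw [hs₀]; exact hmn₀
      simpa [mul_assoc] using h0
    have h2 := hHrefl _ _ h1
    have h3 : (n₀ * m₀) * s₀ ∈ H := by simpa [mul_assoc] using h2
    exact hHuni.1 _ _ h3 hn₀m
  -- quasi-inverses with respect to `H ∩ N`
  have qE : ∀ a : S, ∃ b, b * a ∈ H ∧ a * b ∈ H ∧ b * a ∈ N ∧ a * b ∈ N := by
    intro a
    obtain ⟨t, ht⟩ := hS a s₀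
    have h1 : t * a ∈ H := by rw [ht]; exact hs₀H
    have h2 : t * a ∈ N := by rw [ht]; exact hs₀N
    exact ⟨t, h1, hHrefl _ _ h1, h2, hNrefl _ _ h2⟩
  -- characterization of `H * N` as union of classes of elements of `N`
  have memHN : ∀ x : S, x ∈ H * N ↔ ∃ n ∈ N, RUAux.Rel H x n := by
    intro x
    constructor
    · intro hx
      rw [Set.mem_mul] at hx
      obtain ⟨h, hh, n, hn, rfl⟩ := hx
      exact ⟨n, hn, RUAux.rel_mul_left hS hHne hHmul hHrefl hh n⟩
    · rintro ⟨n, hn, hrel⟩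
      obtain ⟨s, hs⟩ := hS n x
      obtain ⟨n', hn'n, hnn'⟩ := RUAux.qinv hS hHne hHrefl n
      have hrel' : RUAux.Rel H (s * n) n := by rw [hs]; exact hrel
      have hrel2 : RUAux.Rel H ((s * n) * n') (n * n') :=
        RUAux.rel_congr_right hS hHne hHmul hHrefl n' hrel'
      have h4 : (s * n) * n' ∈ H :=
        RUAux.rel_mem hHuni (RUAux.rel_symm hrel2) hnn'
      have h5 : s * (n * n') ∈ H := by simpa [mul_assoc] using h4
      have hsH : s ∈ H := hHuni.2 _ _ h5 hnn'
      rw [← hs]; exact Set.mul_mem_mul hsH hn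
  -- H * N = N * H
  have hcomm : H * N = N * H := by
    ext x
    simp only [Set.mem_mul]
    constructor
    · rintro ⟨h, hh, n, hn, rfl⟩
      obtain ⟨s, hsN, hmv⟩ := RUAux.move hS ⟨n₀, hn₀⟩ hNmul hNrefl hNuni h hn
      exact ⟨s, hsN, h, hh, hmv.symm⟩
    · rintro ⟨n, hn, h, hh, rfl⟩
      obtain ⟨s, hsH, hmv⟩ := RUAux.move hS hHne hHmul hHrefl hHuni n hh
      exact ⟨s, hsH, n, hn, hmv.symm⟩
  -- multiplicative closure of H * N
  have hHNmul : ∀ a ∈ H * N, ∀ b ∈ H * N, a * b ∈ H * N := by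
    intro a ha b hb
    obtain ⟨n, hn, hra⟩ := (memHN a).1 ha
    obtain ⟨m, hm, hrb⟩ := (memHN b).1 hb
    refine (memHN _).2 ⟨n * m, hNmul _ hn _ hm, ?_⟩
    exact RUAux.rel_trans hHmul hHrefl
      (RUAux.rel_congr_left hS hHne hHmul hHrefl a hrb)
      (RUAux.rel_congr_right hS hHne hHmul hHrefl m hra)
  have hHsubHN : H ⊆ H * N := fun h hh =>
    (memHN h).2 ⟨s₀, hs₀N, ⟨s₀, hHmul _ hs₀H _ hh, hHmul _ hs₀H _ hs₀H⟩⟩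
  have hNsubHN : N ⊆ H * N := fun n hn =>
    (memHN n).2 ⟨n, hn, RUAux.rel_refl hS hHne hHrefl n⟩
  refine ⟨hcomm, ?_, ?_, ?_, ?_, ?_⟩
  · -- closure equality
    apply Set.Subset.antisymm
    · have hle : Subsemigroup.closure (H ∪ N) ≤
          ⟨H * N, fun {a b} ha hb => hHNmul a ha b hb⟩ :=
        Subsemigroup.closure_le.2 (Set.union_subset hHsubHN hNsubHN)
      exact hle
    · intro x hx
      rw [Set.mem_mul] at hx
      obtain ⟨h, hh, n, hn, rfl⟩ := hx
      exact Subsemigroup.mul_mem _ (Subsemigroup.subset_closure (Or.inl hh))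
        (Subsemigroup.subset_closure (Or.inr hn))
  · exact ⟨⟨s₀ * n₀, Set.mul_mem_mul hs₀H hn₀⟩, hHNmul⟩
  · -- reflexive
    intro a b hab
    obtain ⟨n, hn, hr⟩ := (memHN _).1 hab
    obtain ⟨a', ha'H, haa'H, ha'N, haa'N⟩ := qE a
    refine (memHN _).2 ⟨a' * n * a, ?_, ?_⟩
    · have h1 : (n * a) * a' ∈ N := by
        have := hNmul _ hn _ haa'N
        simpa [mul_assoc] using this
      have h2 := hNrefl _ _ h1
      simpa [mul_assoc] using h2
    · have r1 : RUAux.Rel H ((a' * a) * (b * a)) (b * a) :=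
        RUAux.rel_mul_left hS hHne hHmul hHrefl ha'H (b * a)
      have key : (a' * a) * (b * a) = (a' * (a * b)) * a := by
        simp [mul_assoc]
      rw [key] at r1
      have r2 : RUAux.Rel H (a' * (a * b)) (a' * n) :=
        RUAux.rel_congr_left hS hHne hHmul hHrefl a' hr
      have r3 : RUAux.Rel H ((a' * (a * b)) * a) ((a' * n) * a) :=
        RUAux.rel_congr_right hS hHne hHmul hHrefl a r2
      exact RUAux.rel_trans hHmul hHrefl (RUAux.rel_symm r1) r3
  · -- left unitary
    intro a b hab ha
    obtain ⟨n, hn, hrab⟩ := (memHN _).1 hab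
    obtain ⟨m, hm, hram⟩ := (memHN _).1 ha
    obtain ⟨a', ha'H, haa'H, ha'N, haa'N⟩ := qE a
    obtain ⟨m', hm'H, hmm'H, hm'N, hmm'N⟩ := qE m
    have hm'memN : m' ∈ N := hNuni.2 _ _ hm'N hm
    have h1 : RUAux.Rel H (a' * a) (a' * m) :=
      RUAux.rel_congr_left hS hHne hHmul hHrefl a' hram
    have h2 : a' * m ∈ H := RUAux.rel_mem hHuni h1 ha'H
    have h3 : m * a' ∈ H := hHrefl _ _ h2
    have ra'm' : RUAux.Rel H a' m' := ⟨m, h3, hmm'H⟩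
    have r1 : RUAux.Rel H ((a' * a) * b) b :=
      RUAux.rel_mul_left hS hHne hHmul hHrefl ha'H b
    have key : (a' * a) * b = a' * (a * b) := mul_assoc _ _ _
    rw [key] at r1
    have r2 : RUAux.Rel H (a' * (a * b)) (a' * n) :=
      RUAux.rel_congr_left hS hHne hHmul hHrefl a' hrab
    have r3 : RUAux.Rel H (a' * n) (m' * n) :=
      RUAux.rel_congr_right hS hHne hHmul hHrefl n ra'm'
    exact (memHN b).2 ⟨m' * n, hNmul _ hm'memN _ hn,
      RUAux.rel_trans hHmul hHrefl
        (RUAux.rel_trans hHmul hHrefl (RUAux.rel_symm r1) r2) r3⟩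
  · -- right unitary
    intro a b hab hb
    obtain ⟨n, hn, hrab⟩ := (memHN _).1 hab
    obtain ⟨m, hm, hrbm⟩ := (memHN _).1 hb
    obtain ⟨b', hb'H, hbb'H, hb'N, hbb'N⟩ := qE b
    obtain ⟨m', hm'H, hmm'H, hm'N, hmm'N⟩ := qE m
    have hm'memN : m' ∈ N := hNuni.2 _ _ hm'N hm
    have h1 : RUAux.Rel H (b' * b) (b' * m) :=
      RUAux.rel_congr_left hS hHne hHmul hHrefl b' hrbm
    have h2 : b' * m ∈ H := RUAux.rel_mem hHuni h1 hb'H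
    have h3 : m * b' ∈ H := hHrefl _ _ h2
    have rb'm' : RUAux.Rel H b' m' := ⟨m, h3, hmm'H⟩
    have r1 : RUAux.Rel H (a * (b * b')) a :=
      RUAux.rel_mul_right hS hHne hHmul hHrefl hbb'H a
    have key : a * (b * b') = (a * b) * b' := (mul_assoc _ _ _).symm
    rw [key] at r1
    have r2 : RUAux.Rel H ((a * b) * b') (n * b') :=
      RUAux.rel_congr_right hS hHne hHmul hHrefl b' hrab
    have r3 : RUAux.Rel H (n * b') (n * m') :=
      RUAux.rel_congr_left hS hHne hHmul hHrefl n rb'm'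
    exact (memHN a).2 ⟨n * m', hNmul _ hn _ hm'memN,
      RUAux.rel_trans hHmul hHrefl
        (RUAux.rel_trans hHmul hHrefl (RUAux.rel_symm r1) r2) r3⟩
end

section
/- A left simple semigroup S containing an idempotent element has no proper reflexive unitary subsemigroup if and only if S is a left zero semigroup. -/
open Pointwise

/-- A left simple semigroup containing an idempotent has no proper reflexive
unitary subsemigroup iff it is a left zero semigroup. -/
theorem no_proper_iff_left_zero {S : Type*} [Semigroup S] (hS : LeftSimple S)
    (e : S) (he : e * e = e) :
    (¬∃ H : Set S, IsSubsemigroup H ∧ IsReflexive H ∧ IsUnitary H ∧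
        H ≠ Set.univ) ↔
      ∀ x y : S, x * y = x := by
  -- Key lemma: in a left simple semigroup, every idempotent is a right identity.
  have rid : ∀ f : S, f * f = f → ∀ a : S, a * f = a := by
    intro f hf a
    obtain ⟨s, hs⟩ := hS f a
    calc a * f = s * f * f := by rw [hs]
    _ = s * (f * f) := mul_assoc ..
    _ = s * f := by rw [hf]
    _ = a := hs
  constructor
  · intro hnone x y
    -- The set of idempotents is a reflexive unitary subsemigroup.
    set H : Set S := {a : S | a * a = a} with hH
    have hHuniv : H = Set.univ := by
      by_contra hne
      apply hnone
      refine ⟨H, ⟨⟨e, he⟩, ?_⟩, ?_, ⟨?_, ?_⟩, hne⟩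
      · intro a ha b hb
        show a * b ∈ {a : S | a * a = a}
        rw [rid b hb a]; exact ha
      · intro a b hab
        show b * a * (b * a) = b * a
        calc b * a * (b * a) = b * (a * b) * a := by simp [mul_assoc]
        _ = b * a := by rw [rid _ hab]
      · intro a b hab ha
        show b * b = b
        calc b * b = b * a * b := by rw [rid a ha]
        _ = b * (a * b) := mul_assoc ..
        _ = b := rid _ hab b
      · intro a b hab hb
        show a * a = a
        have h1 : a * b = a := rid b hb a
        rw [← h1]; exact hab
    have hy : y * y = y := by
      have : y ∈ H := by rw [hHuniv]; trivial
      exact this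
    exact rid y hy x
  · rintro hz ⟨H, ⟨⟨h, hh⟩, -⟩, hrefl, -, hne⟩
    apply hne
    ext x
    simp only [Set.mem_univ, iff_true]
    have : x * h ∈ H := by
      have : h * x ∈ H := by rw [hz h x]; exact hh
      exact hrefl h x this
    rwa [hz x h] at this
end
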